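/- Let E, F be complete lattices, f : E × F → E × F monotone with components f₁, f₂, and let (a₁, a₂) be the least fixed point of f. Then a₂ = μy. f₂(a₁, y) and a₁ = μx. f₁(x, a₂). -/
import Mathlib


/-- Least fixed point of `g` (Knaster-Tarski for monotone `g`). -/
def lfp {α : Type*} [CompleteLattice α] (g : α → α) : α := sInf {x | g x ≤ x}

theorem lfp_le' {α : Type*} [CompleteLattice α] {g : α → α} {x : α} (hx : g x ≤ x) :
    lfp g ≤ x := sInf_le hx

theorem lfp_fixed {α : Type*} [CompleteLattice α] {g : α → α} (hg : Monotone g) :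
    g (lfp g) = lfp g := by
  have h1 : g (lfp g) ≤ lfp g := by
    apply le_sInf
    intro x hx
    exact le_trans (hg (lfp_le' hx)) hx
  exact le_antisymm h1 (lfp_le' (hg h1))

theorem lfp_components {E F : Type*} [CompleteLattice E] [CompleteLattice F]
    (f : E × F → E × F) (hf : Monotone f) (a₁ : E) (a₂ : F)
    (h : lfp f = (a₁, a₂)) :
    a₂ = lfp (fun y => (f (a₁, y)).2) ∧ a₁ = lfp (fun x => (f (x, a₂)).1) := by
  have hfix : f (a₁, a₂) = (a₁, a₂) := by rw [← h]; exact lfp_fixed hf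
  have hfix1 : (f (a₁, a₂)).1 = a₁ := by rw [hfix]
  have hfix2 : (f (a₁, a₂)).2 = a₂ := by rw [hfix]
  constructor
  · set g := fun y => (f (a₁, y)).2 with hg
    have hb_le : lfp g ≤ a₂ := lfp_le' (le_of_eq hfix2)
    have hpre : f (a₁, lfp g) ≤ (a₁, lfp g) := by
      constructor
      · calc (f (a₁, lfp g)).1 ≤ (f (a₁, a₂)).1 :=
              (hf (Prod.mk_le_mk.mpr ⟨le_refl _, hb_le⟩)).1
          _ = a₁ := hfix1
      · exact le_of_eq (lfp_fixed (fun y y' hy => (hf (Prod.mk_le_mk.mpr ⟨le_refl a₁, hy⟩)).2))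
    have := lfp_le' hpre
    rw [h] at this
    exact le_antisymm this.2 hb_le
  · set g := fun x => (f (x, a₂)).1 with hg
    have hb_le : lfp g ≤ a₁ := lfp_le' (le_of_eq hfix1)
    have hpre : f (lfp g, a₂) ≤ (lfp g, a₂) := by
      constructor
      · exact le_of_eq (lfp_fixed (fun x x' hx => (hf (Prod.mk_le_mk.mpr ⟨hx, le_refl a₂⟩)).1))
      · calc (f (lfp g, a₂)).2 ≤ (f (a₁, a₂)).2 :=
              (hf (Prod.mk_le_mk.mpr ⟨hb_le, le_refl _⟩)).2
          _ = a₂ := hfix2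
    have := lfp_le' hpre
    rw [h] at this
    exact le_antisymm this.1 hb_le
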